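/- The extreme points of the convex-form space of the hexagon are exactly the zero form, the unit form, and the six forms v i: Set.extremePoints ℝ OC = {0, 1, v 0, v 1, v 2, v 3, v 4, v 5}, where 0 and 1 denote the constant affine maps with values 0 and 1. -/

import Mathlib

noncomputable section

/-- The vertices of a regular hexagon in `ℝ²`. -/
def s (j : Fin 6) : ℝ × ℝ :=
  (Real.cos (((j : ℕ) + 1 : ℝ) * Real.pi / 3), Real.sin (((j : ℕ) + 1 : ℝ) * Real.pi / 3))

/-- The hexagon. -/
def C : Set (ℝ × ℝ) := convexHull ℝ {s 0, s 1, s 2, s 3, s 4, s 5}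

/-- The prescribed vertex values of the hexagon's extreme convex forms:
`v i (s j) = 1` if `j ∈ {i, i+1}`, `v i (s j) = 1/2` if `j ∈ {i-1, i+2}`, and
`v i (s j) = 0` if `j ∈ {i+3, i+4}` (indices cyclic in `Fin 6`). -/
def IsHexForms (v : Fin 6 → ((ℝ × ℝ) →ᵃ[ℝ] ℝ)) : Prop :=
  ∀ i : Fin 6,
    v i (s i) = 1 ∧ v i (s (i + 1)) = 1 ∧
    v i (s (i - 1)) = 1 / 2 ∧ v i (s (i + 2)) = 1 / 2 ∧
    v i (s (i + 3)) = 0 ∧ v i (s (i + 4)) = 0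

/-- The convex-form space of the hexagon. -/
def OC : Set ((ℝ × ℝ) →ᵃ[ℝ] ℝ) := {f | ∀ x ∈ C, f x ∈ Set.Icc 0 1}

/-!
An affine form on `ℝ²` is determined by its values at three non-collinear points, e.g. at the
vertices `s i`, `s (i + 1)`, `s (i + 3)`. A form in `OC` taking only the values `0` and `1` there
is therefore an extreme point of `OC`, since `0` and `1` are extreme in `[0, 1]`; this covers the
constants and every `v i`.

Conversely, write `x = f (s i)`, `y = f (s (i + 1))` and `c = f 0`, and choose `i` so that `y`
is the largest vertex value of `f`. Then `c ≤ x ≤ y`, and comparing values at `s i`, `s (i + 1)`,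
`s (i + 3)` gives `f = (1 - y) • 0 + (2c - y) • 1 + 2 (x - c) • v i + 2 (y - x) • v (i + 1)`,
a convex combination because `y ≤ 1` and `2c - y = f (s (i + 4)) ≥ 0`. Hence `OC` is the convex
hull of the eight forms.
-/

open Set Real

theorem affineSpan_triple_eq_top_of_det_ne_zero {k : Type*} [Field k] {p q r : k × k}
    (h : (q.1 - p.1) * (r.2 - p.2) - (q.2 - p.2) * (r.1 - p.1) ≠ 0) :
    affineSpan k {p, q, r} = ⊤ := by
  refine eq_top_iff.2 fun x _ => ?_
  set D := (q.1 - p.1) * (r.2 - p.2) - (q.2 - p.2) * (r.1 - p.1)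
  -- Cramer's rule
  have hx : x = ((((x.1 - p.1) * (r.2 - p.2) - (x.2 - p.2) * (r.1 - p.1)) / D) • (q -ᵥ p) +
      (((q.1 - p.1) * (x.2 - p.2) - (q.2 - p.2) * (x.1 - p.1)) / D) • (r -ᵥ p)) +ᵥ p := by
    ext <;> simp <;> field_simp <;> ring
  rw [hx]
  refine AffineSubspace.vadd_mem_of_mem_direction ?_ (mem_affineSpan k (by simp))
  rw [direction_affineSpan]
  exact add_mem (Submodule.smul_mem _ _ (vsub_mem_vectorSpan k (by simp) (by simp)))
    (Submodule.smul_mem _ _ (vsub_mem_vectorSpan k (by simp) (by simp)))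

theorem AffineMap.map_add_add_map_zero {k V W : Type*} [Ring k] [AddCommGroup V] [Module k V]
    [AddCommGroup W] [Module k W] (f : V →ᵃ[k] W) (x y : V) :
    f (x + y) + f 0 = f x + f y := by
  rw [f.decomp]; simp; abel

theorem mem_extremePoints_of_affineSpan_eq_top {k V P W : Type*} [Field k] [LinearOrder k]
    [IsStrictOrderedRing k] [AddCommGroup V] [Module k V] [AddTorsor V P] [AddCommGroup W]
    [Module k W] {K : Set (P →ᵃ[k] W)} {T : Set P} {S : Set W} (hT : affineSpan k T = ⊤)
    (hK : ∀ f ∈ K, ∀ x ∈ T, f x ∈ S) {p : P →ᵃ[k] W} (hp : p ∈ K)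
    (hpT : ∀ x ∈ T, p x ∈ S.extremePoints k) :
    p ∈ K.extremePoints k := by
  refine ⟨hp, fun f hf g hg hfg => AffineMap.ext_on hT fun x hx => ?_⟩
  obtain ⟨a, b, ha, hb, hab, rfl⟩ := hfg
  exact (hpT x hx).2 (hK f hf x hx) (hK g hg x hx) ⟨a, b, ha, hb, hab, by simp⟩

theorem smul_add_smul_add_smul_add_smul_mem_convexHull {𝕜 E : Type*} [Field 𝕜] [LinearOrder 𝕜]
    [IsStrictOrderedRing 𝕜] [AddCommGroup E] [Module 𝕜 E] {s : Set E} {x₁ x₂ x₃ x₄ : E}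
    (h₁ : x₁ ∈ s) (h₂ : x₂ ∈ s) (h₃ : x₃ ∈ s) (h₄ : x₄ ∈ s) {a₁ a₂ a₃ a₄ : 𝕜} (ha₁ : 0 ≤ a₁)
    (ha₂ : 0 ≤ a₂) (ha₃ : 0 ≤ a₃) (ha₄ : 0 ≤ a₄) (ha : a₁ + a₂ + a₃ + a₄ = 1) :
    a₁ • x₁ + a₂ • x₂ + a₃ • x₃ + a₄ • x₄ ∈ convexHull 𝕜 s := by
  simpa [Fin.sum_univ_four, add_assoc] using (convex_convexHull 𝕜 s).sum_mem (t := Finset.univ)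
    (w := ![a₁, a₂, a₃, a₄]) (z := ![x₁, x₂, x₃, x₄])
    (by simp [Fin.forall_fin_succ, *]) (by simp [Fin.sum_univ_four, ha])
    (by simp [Fin.forall_fin_succ, subset_convexHull 𝕜 s h₁, subset_convexHull 𝕜 s h₂,
      subset_convexHull 𝕜 s h₃, subset_convexHull 𝕜 s h₄])

namespace Hexagon

private lemma s_eq_of_angle {j : Fin 6} {θ : ℝ} (h : ((j : ℕ) + 1 : ℝ) * π / 3 = θ) :
    s j = (cos θ, sin θ) := by
  rw [← h]; rfl

lemma s_zero : s 0 = (1 / 2, √3 / 2) := by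
  simp [s, cos_pi_div_three, sin_pi_div_three]

lemma s_one : s 1 = (-(1 / 2), √3 / 2) := by
  rw [s_eq_of_angle (θ := π - π / 3) (by norm_num; ring)]
  simp [cos_pi_div_three, sin_pi_div_three]

lemma s_two : s 2 = (-1, 0) := by
  rw [s_eq_of_angle (θ := π) (by norm_num)]
  simp

lemma s_three : s 3 = (-(1 / 2), -(√3 / 2)) := by
  rw [s_eq_of_angle (θ := π / 3 + π) (by norm_num; ring)]
  simp [cos_pi_div_three, sin_pi_div_three]

lemma s_four : s 4 = (1 / 2, -(√3 / 2)) := by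
  rw [s_eq_of_angle (θ := π - π / 3 + π) (by norm_num; ring)]
  simp [cos_pi_div_three, sin_pi_div_three]

lemma s_five : s 5 = (1, 0) := by
  rw [s_eq_of_angle (θ := 2 * π) (by norm_num; ring)]
  simp

lemma s_add_one (j : Fin 6) : s (j + 1) = s j + s (j + 2) := by
  fin_cases j <;> simp [s_zero, s_one, s_two, s_three, s_four, s_five] <;> norm_num

lemma affineSpan_s_eq_top (i : Fin 6) : affineSpan ℝ {s i, s (i + 1), s (i + 3)} = ⊤ := by
  refine affineSpan_triple_eq_top_of_det_ne_zero (ne_of_eq_of_ne ?_ (by positivity : √3 ≠ 0))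
  fin_cases i <;> simp [s_zero, s_one, s_two, s_three, s_four, s_five] <;> ring

lemma map_s_add_one (f : (ℝ × ℝ) →ᵃ[ℝ] ℝ) (j : Fin 6) :
    f (s (j + 1)) + f 0 = f (s j) + f (s (j + 2)) := by
  rw [s_add_one, f.map_add_add_map_zero]

lemma map_s_add_three (f : (ℝ × ℝ) →ᵃ[ℝ] ℝ) (j : Fin 6) :
    f (s (j + 3)) + f (s j) = 2 * f 0 := by
  have h₀ := map_s_add_one f j
  have h₁ := map_s_add_one f (j + 1)
  simp only [add_assoc, Fin.reduceAdd] at h₁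
  linarith

lemma exists_map_zero_le_map_s_le (f : (ℝ × ℝ) →ᵃ[ℝ] ℝ) :
    ∃ i, f 0 ≤ f (s i) ∧ f (s i) ≤ f (s (i + 1)) := by
  obtain ⟨j, hj⟩ := Finite.exists_max fun j => f (s j)
  obtain ⟨i, rfl⟩ : ∃ i, j = i + 1 := ⟨j - 1, by simp⟩
  exact ⟨i, by linarith [map_s_add_one f i, hj (i + 2)], hj i⟩

lemma mem_OC_iff {f : (ℝ × ℝ) →ᵃ[ℝ] ℝ} : f ∈ OC ↔ ∀ j, f (s j) ∈ Icc 0 1 := by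
  change C ⊆ f ⁻¹' Icc 0 1 ↔ _
  rw [C, ((convex_Icc 0 1).affine_preimage f).convexHull_subset_iff]
  simp [Set.insert_subset_iff, Fin.forall_fin_succ]

lemma convex_OC : Convex ℝ OC := fun f hf g hg a b ha hb hab x hx => by
  simpa using convex_Icc (0 : ℝ) 1 (hf x hx) (hg x hx) ha hb hab

lemma mem_extremePoints_OC {f : (ℝ × ℝ) →ᵃ[ℝ] ℝ} (hf : f ∈ OC) (i : Fin 6)
    (h₀ : f (s i) = 0 ∨ f (s i) = 1) (h₁ : f (s (i + 1)) = 0 ∨ f (s (i + 1)) = 1)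
    (h₃ : f (s (i + 3)) = 0 ∨ f (s (i + 3)) = 1) : f ∈ OC.extremePoints ℝ := by
  refine mem_extremePoints_of_affineSpan_eq_top (affineSpan_s_eq_top i)
    (fun g hg x hx => ?_) hf (S := Icc 0 1) ?_
  · rcases hx with rfl | rfl | rfl <;> exact mem_OC_iff.1 hg _
  · simpa [extremePoints_Icc] using ⟨h₀, h₁, h₃⟩

lemma const_mem_extremePoints_OC {c : ℝ} (hc : c = 0 ∨ c = 1) :
    AffineMap.const ℝ (ℝ × ℝ) c ∈ OC.extremePoints ℝ :=
  mem_extremePoints_OC (fun _ _ => by rcases hc with rfl | rfl <;> simp) 0 hc hc hc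

end Hexagon

open Hexagon

namespace IsHexForms

variable {v : Fin 6 → (ℝ × ℝ) →ᵃ[ℝ] ℝ}

lemma apply_s_add (hv : IsHexForms v) (i k : Fin 6) :
    v i (s (i + k)) = ![1, 1, 1 / 2, 0, 0, 1 / 2] k := by
  obtain ⟨h₀, h₁, h₅, h₂, h₃, h₄⟩ := hv i
  rw [show i - 1 = i + 5 by grind] at h₅
  fin_cases k <;> simp [*]

lemma mem_OC (hv : IsHexForms v) (i : Fin 6) : v i ∈ OC := by
  refine mem_OC_iff.2 fun j => ?_
  obtain ⟨k, rfl⟩ : ∃ k, j = i + k := ⟨j - i, by abel⟩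
  rw [hv.apply_s_add]
  fin_cases k <;> norm_num

lemma mem_extremePoints (hv : IsHexForms v) (i : Fin 6) : v i ∈ OC.extremePoints ℝ := by
  obtain ⟨h₀, h₁, -, -, h₃, -⟩ := hv i
  exact mem_extremePoints_OC (hv.mem_OC i) i (.inr h₀) (.inr h₁) (.inl h₃)

lemma subset_extremePoints (hv : IsHexForms v) :
    {AffineMap.const ℝ (ℝ × ℝ) (0 : ℝ), AffineMap.const ℝ (ℝ × ℝ) (1 : ℝ),
      v 0, v 1, v 2, v 3, v 4, v 5} ⊆ OC.extremePoints ℝ := by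
  rintro f (rfl | rfl | rfl | rfl | rfl | rfl | rfl | rfl)
  exacts [const_mem_extremePoints_OC (.inl rfl), const_mem_extremePoints_OC (.inr rfl),
    hv.mem_extremePoints 0, hv.mem_extremePoints 1, hv.mem_extremePoints 2,
    hv.mem_extremePoints 3, hv.mem_extremePoints 4, hv.mem_extremePoints 5]

lemma eq_smul_add_smul_add_smul (hv : IsHexForms v) (f : (ℝ × ℝ) →ᵃ[ℝ] ℝ) (i : Fin 6) :
    f = (2 * f 0 - f (s (i + 1))) • AffineMap.const ℝ (ℝ × ℝ) (1 : ℝ) +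
      (2 * (f (s i) - f 0)) • v i + (2 * (f (s (i + 1)) - f (s i))) • v (i + 1) := by
  obtain ⟨a₀, a₁, -, -, a₃, -⟩ := hv i
  obtain ⟨b₁, -, b₀, b₃, -, -⟩ := hv (i + 1)
  simp only [add_sub_cancel_right, add_assoc, Fin.reduceAdd] at b₀ b₃
  have := map_s_add_three f i
  refine AffineMap.ext_on (affineSpan_s_eq_top i) fun x hx => ?_
  rcases hx with rfl | rfl | rfl <;> simp [*] <;> linarith

lemma mem_convexHull (hv : IsHexForms v) {f : (ℝ × ℝ) →ᵃ[ℝ] ℝ} (hf : f ∈ OC) :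
    f ∈ convexHull ℝ {AffineMap.const ℝ (ℝ × ℝ) (0 : ℝ), AffineMap.const ℝ (ℝ × ℝ) (1 : ℝ),
      v 0, v 1, v 2, v 3, v 4, v 5} := by
  obtain ⟨i, h₀, h₁⟩ := exists_map_zero_le_map_s_le f
  have h₄ := map_s_add_three f (i + 1)
  simp only [add_assoc, Fin.reduceAdd] at h₄
  have hf₁ := (mem_OC_iff.1 hf (i + 1)).2
  have hf₄ := (mem_OC_iff.1 hf (i + 4)).1
  have hv_mem : ∀ j, v j ∈ ({AffineMap.const ℝ (ℝ × ℝ) (0 : ℝ),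
      AffineMap.const ℝ (ℝ × ℝ) (1 : ℝ), v 0, v 1, v 2, v 3, v 4, v 5} : Set _) := by
    intro j; fin_cases j <;> simp
  have := smul_add_smul_add_smul_add_smul_mem_convexHull (mem_insert _ _)
    (mem_insert_of_mem _ (mem_insert _ _)) (hv_mem i) (hv_mem (i + 1))
    (a₁ := 1 - f (s (i + 1))) (a₂ := 2 * f 0 - f (s (i + 1))) (a₃ := 2 * (f (s i) - f 0))
    (a₄ := 2 * (f (s (i + 1)) - f (s i)))
    (by linarith) (by linarith) (by linarith) (by linarith) (by ring)
  rwa [show AffineMap.const ℝ (ℝ × ℝ) (0 : ℝ) = 0 from rfl, smul_zero, zero_add,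
    ← hv.eq_smul_add_smul_add_smul] at this

end IsHexForms

/-- The extreme points of the convex-form space of the hexagon are exactly the zero
form, the unit form, and the six forms `v i`. -/
theorem extremePoints_OC :
    ∀ v : Fin 6 → ((ℝ × ℝ) →ᵃ[ℝ] ℝ), IsHexForms v →
      Set.extremePoints ℝ OC =
        {AffineMap.const ℝ (ℝ × ℝ) (0 : ℝ), AffineMap.const ℝ (ℝ × ℝ) (1 : ℝ),
         v 0, v 1, v 2, v 3, v 4, v 5} := by
  intro v hv
  refine Subset.antisymm ?_ hv.subset_extremePoints
  have hOC := Subset.antisymm (fun f => hv.mem_convexHull)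
    (convexHull_min (hv.subset_extremePoints.trans extremePoints_subset) convex_OC)
  rw [hOC]
  exact extremePoints_convexHull_subset
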